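/- arXiv:2605.14776 — 4 statements merged into one kernel-verified Lean document; each statement's English description precedes it below -/
import Mathlib

section
/- Let 0 ≤ λ < γ ≤ δ and define K₁ : [0,1] → ℝ by K₁(r) = r + Σ_{m=2}^∞ 2c_m r^m − 1 − Σ_{m=2}^∞ (−1)^{m−1} c_m with c_m = 4(γ−λ)/(m^2(2γ+(δ−γ)(m−1))). Then K₁ is strictly increasing on (0,1), K₁(0) < 0, K₁(1) > 0, and K₁ has a unique root in (0,1). -/
/-! The coefficients `c (m + 2)` are positive, decreasing in `m` and `O(1/m²)`, so the power
series `∑ 2 c (m + 2) r ^ (m + 2)` converges uniformly on `[0, 1]`, where it is continuous and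
increasing; adding `r` makes `K₁` strictly increasing. The constant `∑ (-1) ^ m c (m + 2)` is an
alternating series with decreasing terms, hence lies in `[0, c 2]`, and
`c 2 = (γ - λ) / (γ + δ) < 1`. This gives `K₁ 0 < 0 < K₁ 1`, and the intermediate value theorem
gives the root. -/

open Set

theorem Antitone.tsum_alternating_mem_Icc {f : ℕ → ℝ} (hfa : Antitone f) (hf : Summable f) :
    ∑' i, (-1) ^ i * f i ∈ Icc 0 (f 0) := by
  have hsum : Summable fun i => (-1 : ℝ) ^ i * f i :=
    hf.abs.of_norm_bounded fun i => by simp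
  have hlim := hsum.hasSum.tendsto_sum_nat
  refine ⟨?_, ?_⟩
  · simpa using hfa.alternating_series_le_tendsto hlim 0
  · simpa using hfa.tendsto_le_alternating_series hlim 0

theorem continuousOn_tsum_mul_pow {b : ℕ → ℝ} (hb : Summable fun m => ‖b m‖) (k : ℕ → ℕ) :
    ContinuousOn (fun r : ℝ => ∑' m, b m * r ^ k m) (Icc (-1) 1) := by
  refine continuousOn_tsum (fun m => (continuousOn_pow (k m)).const_smul (b m)) hb
    fun m r hr => ?_
  rw [norm_mul, norm_pow]
  exact mul_le_of_le_one_right (norm_nonneg _) (pow_le_one₀ (norm_nonneg _) (abs_le.2 hr))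

theorem monotoneOn_tsum_mul_pow {b : ℕ → ℝ} (hb0 : ∀ m, 0 ≤ b m) (hb : Summable b)
    (k : ℕ → ℕ) : MonotoneOn (fun r : ℝ => ∑' m, b m * r ^ k m) (Icc 0 1) := by
  have hsum : ∀ r ∈ Icc (0 : ℝ) 1, Summable fun m => b m * r ^ k m := fun r hr =>
    hb.of_nonneg_of_le (fun m => mul_nonneg (hb0 m) (pow_nonneg hr.1 _))
      fun m => mul_le_of_le_one_right (hb0 m) (pow_le_one₀ hr.1 hr.2)
  intro r hr s hs hrs
  exact (hsum r hr).tsum_le_tsum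
    (fun m => mul_le_mul_of_nonneg_left (pow_le_pow_left₀ hr.1 hrs _) (hb0 m)) (hsum s hs)

theorem StrictMonoOn.existsUnique_mem_Ioo_eq {f : ℝ → ℝ} {a b y : ℝ} (hab : a ≤ b)
    (hf : StrictMonoOn f (Icc a b)) (hfc : ContinuousOn f (Icc a b)) (hy : y ∈ Ioo (f a) (f b)) :
    ∃! r, r ∈ Ioo a b ∧ f r = y := by
  obtain ⟨r, hr, hfr⟩ := intermediate_value_Ioo hab hfc hy
  exact ⟨r, ⟨hr, hfr⟩, fun s ⟨hs, hfs⟩ =>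
    hf.injOn (Ioo_subset_Icc_self hs) (Ioo_subset_Icc_self hr) (hfs.trans hfr.symm)⟩

section Coefficients

variable {γ δ lam : ℝ}

noncomputable def brDenom (γ δ : ℝ) (m : ℕ) : ℝ :=
  ((m : ℝ) + 2) ^ 2 * (2 * γ + (δ - γ) * ((m : ℝ) + 1))

/-- `c (m + 2)`, reindexed to start at `m = 0`. -/
noncomputable def brCoeff (γ δ lam : ℝ) (m : ℕ) : ℝ :=
  4 * (γ - lam) / brDenom γ δ m

theorem two_mul_sq_le_brDenom (hg : γ ≤ δ) (m : ℕ) : 2 * γ * ((m : ℝ) + 2) ^ 2 ≤ brDenom γ δ m := by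
  have : 0 ≤ (δ - γ) * ((m : ℝ) + 1) := mul_nonneg (by linarith) (by positivity)
  unfold brDenom
  nlinarith [sq_nonneg ((m : ℝ) + 2)]

theorem brDenom_pos (hγ : 0 < γ) (hg : γ ≤ δ) (m : ℕ) : 0 < brDenom γ δ m :=
  lt_of_lt_of_le (by positivity) (two_mul_sq_le_brDenom hg m)

theorem brDenom_mono (hγ : 0 ≤ γ) (hg : γ ≤ δ) : Monotone (brDenom γ δ) := by
  intro m n hmn
  have hmn' : (m : ℝ) ≤ n := Nat.cast_le.2 hmn
  have hδγ : 0 ≤ δ - γ := by linarith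
  unfold brDenom
  gcongr

theorem brCoeff_pos (hl : lam < γ) (hγ : 0 < γ) (hg : γ ≤ δ) (m : ℕ) : 0 < brCoeff γ δ lam m :=
  div_pos (by linarith) (brDenom_pos hγ hg m)

theorem brCoeff_antitone (hl : lam ≤ γ) (hγ : 0 < γ) (hg : γ ≤ δ) :
    Antitone (brCoeff γ δ lam) := fun _ _ hmn =>
  div_le_div_of_nonneg_left (by linarith) (brDenom_pos hγ hg _) (brDenom_mono hγ.le hg hmn)

theorem brCoeff_summable (hγ : 0 < γ) (hg : γ ≤ δ) : Summable (brCoeff γ δ lam) := by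
  have hsq : Summable fun m : ℕ => (((m : ℝ) + 2) ^ 2)⁻¹ := by
    simpa using (summable_nat_add_iff 2).2 (Real.summable_nat_pow_inv.2 one_lt_two)
  refine ((hsq.mul_left (2 * γ)⁻¹).of_nonneg_of_le (fun m => ?_) fun m => ?_).mul_left
    (4 * (γ - lam))
  · exact inv_nonneg.2 (brDenom_pos hγ hg m).le
  · rw [← mul_inv]
    exact inv_anti₀ (by positivity) (two_mul_sq_le_brDenom hg m)

theorem brCoeff_zero_lt_one (hlam : 0 ≤ lam) (hγ : 0 < γ) (hg : γ ≤ δ) :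
    brCoeff γ δ lam 0 < 1 := by
  rw [brCoeff, div_lt_one (brDenom_pos hγ hg 0), brDenom]
  push_cast
  linarith

end Coefficients

theorem bohr_rogosinski_aux_K1_unique_root (γ δ lam : ℝ) (hlam : 0 ≤ lam) (hl : lam < γ)
    (hg : γ ≤ δ)
    (c : ℕ → ℝ)
    (hc : ∀ m : ℕ, c m = 4 * (γ - lam) / ((m : ℝ) ^ 2 * (2 * γ + (δ - γ) * ((m : ℝ) - 1))))
    (K₁ : ℝ → ℝ)
    (hK : ∀ r : ℝ, K₁ r =
      r + (∑' m : ℕ, 2 * c (m + 2) * r ^ (m + 2))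
        - 1 - ∑' m : ℕ, (-1 : ℝ) ^ (m + 1) * c (m + 2)) :
    StrictMonoOn K₁ (Ioo 0 1) ∧ K₁ 0 < 0 ∧ 0 < K₁ 1 ∧
      (∃! r : ℝ, r ∈ Ioo (0 : ℝ) 1 ∧ K₁ r = 0) := by
  have hγ : 0 < γ := hlam.trans_lt hl
  set a := brCoeff γ δ lam
  have hca : ∀ m, c (m + 2) = a m := fun m => by
    rw [hc]; simp only [a, brCoeff, brDenom]; push_cast; ring
  have ha_sum : Summable a := brCoeff_summable hγ hg
  have hb_nonneg : ∀ m, 0 ≤ 2 * a m := fun m => by linarith [brCoeff_pos hl hγ hg m]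
  obtain ⟨hS_nonneg, hS_le⟩ := (brCoeff_antitone hl.le hγ hg).tsum_alternating_mem_Icc ha_sum
  set S := ∑' m, (-1 : ℝ) ^ m * a m
  set P := fun r : ℝ => ∑' m, 2 * a m * r ^ (m + 2)
  have hK' : ∀ r, K₁ r = r + P r + (S - 1) := fun r => by
    rw [hK]; simp only [hca, pow_succ, mul_neg_one, neg_mul, tsum_neg, P, S]; ring
  have hP0 : P 0 = 0 := by simp [P]
  have hP1 : P 1 = 2 * ∑' m, a m := by simp [P, tsum_mul_left]
  have hmono : StrictMonoOn K₁ (Icc 0 1) := fun r hr s hs hrs => by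
    have := monotoneOn_tsum_mul_pow hb_nonneg (ha_sum.mul_left 2) (· + 2) hr hs hrs.le
    rw [hK', hK']
    linarith
  have hcont : ContinuousOn K₁ (Icc 0 1) := by
    have hP : ContinuousOn P (Icc 0 1) :=
      (continuousOn_tsum_mul_pow (by simpa using (ha_sum.mul_left 2).abs) (· + 2)).mono
        (Icc_subset_Icc_left (by norm_num))
    rw [show K₁ = _ from funext hK']
    exact (continuousOn_id.add hP).add continuousOn_const
  have hK0 : K₁ 0 < 0 := by
    rw [hK', hP0]
    linarith [brCoeff_zero_lt_one hlam hγ hg]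
  have hK1 : 0 < K₁ 1 := by
    rw [hK', hP1]
    linarith [ha_sum.tsum_pos (fun m => (brCoeff_pos hl hγ hg m).le) 0 (brCoeff_pos hl hγ hg 0)]
  exact ⟨hmono.mono Ioo_subset_Icc_self, hK0, hK1,
    hmono.existsUnique_mem_Ioo_eq zero_le_one hcont ⟨hK0, hK1⟩⟩
end

section
/- Define G₂(r) = −3r + 8·Li₂(r) − 8 + (8 − 8/r)·log(1−r) − 3 − π²/3 + 8·log 2 for r ∈ (0,1). Then G₂ is strictly increasing on (0,1) and has a unique root in (0,1), lying in the interval (0.52, 0.53). -/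
open Real Set

/-!
By the partial fractions `1 / ((m + 1)² (m + 2)) = 1 / (m + 1)² - 1 / (m + 1) + 1 / (m + 2)`
and the series of `log (1 - r)`, on `(0, 1)`
`G₂ r = -3 r + 8 ∑ r ^ (m + 1) / ((m + 1)² (m + 2)) - (3 + π² / 3 - 8 log 2)`.
The series has positive coefficients and linear term `4 r`, which beats `-3 r`, so `G₂` is
strictly increasing. Its first eight terms, with a geometric bound on the tail, show that `G₂`
changes sign between `0.52` and `0.53`, and the intermediate value theorem gives the root.
-/

theorem summable_pow_succ_div {d : ℕ → ℝ} (hd : Monotone d) (hd0 : 0 < d 0) {r : ℝ}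
    (hr : |r| < 1) : Summable fun m : ℕ => r ^ (m + 1) / d m := by
  refine Summable.of_norm_bounded
    (((summable_geometric_of_lt_one (abs_nonneg r) hr).mul_left |r|).div_const (d 0))
    fun m => ?_
  have hdm : 0 < d m := hd0.trans_le (hd (Nat.zero_le m))
  rw [norm_div, norm_pow, norm_eq_abs, norm_eq_abs, abs_of_pos hdm, ← pow_succ']
  gcongr
  exact hd (Nat.zero_le m)

theorem tsum_pow_succ_div_le {d : ℕ → ℝ} (hd : Monotone d) (hd0 : 0 < d 0) {r : ℝ}
    (hr0 : 0 ≤ r) (hr1 : r < 1) (N : ℕ) :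
    ∑' m : ℕ, r ^ (m + 1) / d m ≤
      ∑ m ∈ Finset.range N, r ^ (m + 1) / d m + r ^ (N + 1) / (d N * (1 - r)) := by
  have hr : |r| < 1 := by rwa [abs_of_nonneg hr0]
  have hdN : 0 < d N := hd0.trans_le (hd (Nat.zero_le N))
  have htail : ∀ i : ℕ, r ^ (i + N + 1) / d (i + N) ≤ r ^ (N + 1) / d N * r ^ i := by
    intro i
    rw [div_mul_eq_mul_div, ← pow_add, show N + 1 + i = i + N + 1 by omega]
    gcongr
    exact hd (Nat.le_add_left N i)
  calc ∑' m : ℕ, r ^ (m + 1) / d m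
      = ∑ m ∈ Finset.range N, r ^ (m + 1) / d m + ∑' i : ℕ, r ^ (i + N + 1) / d (i + N) :=
        ((summable_pow_succ_div hd hd0 hr).sum_add_tsum_nat_add N).symm
    _ ≤ ∑ m ∈ Finset.range N, r ^ (m + 1) / d m + ∑' i : ℕ, r ^ (N + 1) / d N * r ^ i :=
        add_le_add_right (((summable_nat_add_iff N).mpr
          (summable_pow_succ_div hd hd0 hr)).tsum_le_tsum htail
          ((summable_geometric_of_lt_one hr0 hr1).mul_left _)) _
    _ = _ := by rw [tsum_mul_left, tsum_geometric_of_lt_one hr0 hr1, ← div_eq_mul_inv, div_div]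

theorem div_le_tsum_pow_succ_div_sub {d : ℕ → ℝ} (hd : Monotone d) (hd0 : 0 < d 0) {a b : ℝ}
    (ha : 0 ≤ a) (hab : a ≤ b) (hb : b < 1) :
    (b - a) / d 0 ≤ ∑' m : ℕ, b ^ (m + 1) / d m - ∑' m : ℕ, a ^ (m + 1) / d m := by
  have ha' : |a| < 1 := by rw [abs_of_nonneg ha]; linarith
  have hb' : |b| < 1 := by rw [abs_of_nonneg (ha.trans hab)]; exact hb
  have hsum := (summable_pow_succ_div hd hd0 hb').hasSum.sub
    (summable_pow_succ_div hd hd0 ha').hasSum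
  calc (b - a) / d 0 = b ^ (0 + 1) / d 0 - a ^ (0 + 1) / d 0 := by
        rw [zero_add, pow_one, pow_one, sub_div]
    _ ≤ _ := le_hasSum hsum 0 fun m _ => by
      have hdm : 0 < d m := hd0.trans_le (hd (Nat.zero_le m))
      rw [sub_nonneg]
      gcongr

theorem continuousOn_tsum_pow_succ_div {d : ℕ → ℝ} (hd : ∀ m, 0 < d m)
    (hs : Summable fun m => (d m)⁻¹) :
    ContinuousOn (fun x : ℝ => ∑' m : ℕ, x ^ (m + 1) / d m) (Icc (-1) 1) := by
  refine continuousOn_tsum (fun m => (continuous_pow (m + 1)).continuousOn.div_const _) hs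
    fun m x hx => ?_
  rw [norm_div, norm_pow, norm_eq_abs, norm_eq_abs, abs_of_pos (hd m), div_eq_mul_inv]
  exact mul_le_of_le_one_left (inv_nonneg.mpr (hd m).le)
    (pow_le_one₀ (abs_nonneg x) (abs_le.mpr hx))

noncomputable def dilog (x : ℝ) : ℝ := ∑' m : ℕ, x ^ (m + 1) / ((m : ℝ) + 1) ^ 2

theorem hasSum_dilog {x : ℝ} (hx : |x| < 1) :
    HasSum (fun m : ℕ => x ^ (m + 1) / ((m : ℝ) + 1) ^ 2) (dilog x) :=
  (summable_pow_succ_div (fun _ _ h => by gcongr) (by norm_num) hx).hasSum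

theorem hasSum_pow_succ_div_sq_mul {x : ℝ} (hx0 : x ≠ 0) (hx : |x| < 1) :
    HasSum (fun m : ℕ => x ^ (m + 1) / (((m : ℝ) + 1) ^ 2 * ((m : ℝ) + 2)))
      (dilog x - 1 + (1 - 1 / x) * log (1 - x)) := by
  have hlog := hasSum_pow_div_log_of_abs_lt_one hx
  have hlog_shift : HasSum (fun m : ℕ => x ^ (m + 2) / ((m : ℝ) + 2)) (-log (1 - x) - x) := by
    have h := (hasSum_nat_add_iff' 1).mpr hlog
    rw [Finset.sum_range_one, Nat.cast_zero, zero_add, zero_add, pow_one, div_one] at h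
    refine h.congr_fun fun m => ?_
    push_cast
    ring_nf
  have h := ((hasSum_dilog hx).sub hlog).add (hlog_shift.div_const x)
  rw [show dilog x - -log (1 - x) + (-log (1 - x) - x) / x =
      dilog x - 1 + (1 - 1 / x) * log (1 - x) by field_simp; ring] at h
  refine h.congr_fun fun m => ?_
  field_simp
  ring

noncomputable def g2 (r : ℝ) : ℝ :=
  -3 * r + 8 * dilog r - 8 + (8 - 8 / r) * log (1 - r) - 3 - π ^ 2 / 3 + 8 * log 2

theorem monotone_succ_sq_mul_add_two :
    Monotone fun m : ℕ => ((m : ℝ) + 1) ^ 2 * ((m : ℝ) + 2) :=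
  fun _ _ h => by dsimp only; gcongr

theorem g2_eq_tsum {r : ℝ} (hr : r ∈ Ioo 0 1) :
    g2 r = -3 * r + 8 * ∑' m : ℕ, r ^ (m + 1) / (((m : ℝ) + 1) ^ 2 * ((m : ℝ) + 2)) -
      (3 + π ^ 2 / 3 - 8 * log 2) := by
  rw [(hasSum_pow_succ_div_sq_mul hr.1.ne' (by rw [abs_of_pos hr.1]; exact hr.2)).tsum_eq, g2]
  ring

theorem strictMonoOn_g2 : StrictMonoOn g2 (Ioo 0 1) := by
  intro a ha b hb hab
  have hgap := div_le_tsum_pow_succ_div_sub monotone_succ_sq_mul_add_two (by norm_num)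
    ha.1.le hab.le hb.2
  norm_num at hgap
  rw [g2_eq_tsum ha, g2_eq_tsum hb]
  linarith

theorem continuousOn_g2 : ContinuousOn g2 (Ioo 0 1) := by
  have hsum : Summable fun m : ℕ => (((m : ℝ) + 1) ^ 2 * ((m : ℝ) + 2))⁻¹ := by
    refine Summable.of_nonneg_of_le (fun m => by positivity) (fun m => ?_)
      ((summable_nat_add_iff 1).mpr (summable_nat_pow_inv.mpr one_lt_two))
    push_cast
    gcongr
    exact le_mul_of_one_le_right (by positivity) (by linarith [m.cast_nonneg (α := ℝ)])
  have hT := (continuousOn_tsum_pow_succ_div (fun m => by positivity) hsum).mono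
    (Ioo_subset_Icc_self.trans (Icc_subset_Icc (by norm_num : (-1 : ℝ) ≤ 0) le_rfl))
  exact ContinuousOn.congr (by fun_prop) fun r hr => g2_eq_tsum hr

theorem g2_lt_zero : g2 0.52 < 0 := by
  have hT := tsum_pow_succ_div_le monotone_succ_sq_mul_add_two (by norm_num)
    (r := 0.52) (by norm_num) (by norm_num) 8
  norm_num [Finset.sum_range_succ] at hT
  rw [g2_eq_tsum (by norm_num)]
  nlinarith [pi_gt_d4, log_two_lt_d9]

theorem zero_lt_g2 : 0 < g2 0.53 := by
  have hT := Summable.sum_le_tsum (Finset.range 8) (fun m _ => by positivity)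
    (summable_pow_succ_div monotone_succ_sq_mul_add_two (by norm_num) (r := 0.53) (by norm_num))
  norm_num [Finset.sum_range_succ] at hT
  rw [g2_eq_tsum (by norm_num)]
  nlinarith [pi_lt_d4, log_two_gt_d9, pi_pos]

theorem StrictMonoOn.existsUnique_eq_zero {f : ℝ → ℝ} {s : Set ℝ} (hs : s.OrdConnected)
    (hf : StrictMonoOn f s) (hfc : ContinuousOn f s) {a b : ℝ} (ha : a ∈ s) (hb : b ∈ s)
    (hfa : f a < 0) (hfb : 0 < f b) :
    (∃! r : ℝ, r ∈ s ∧ f r = 0) ∧ ∀ r ∈ s, f r = 0 → r ∈ Ioo a b := by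
  have hab : a ≤ b := ((hf.lt_iff_lt ha hb).mp (hfa.trans hfb)).le
  obtain ⟨c, hc, hc0⟩ := intermediate_value_Ioo hab (hfc.mono (hs.out ha hb)) ⟨hfa, hfb⟩
  have hcs : c ∈ s := hs.out ha hb (Ioo_subset_Icc_self hc)
  refine ⟨⟨c, ⟨hcs, hc0⟩, fun r hr => hf.injOn hr.1 hcs (hr.2.trans hc0.symm)⟩,
    fun r hr hr0 => ⟨?_, ?_⟩⟩
  · exact (hf.lt_iff_lt ha hr).mp (hfa.trans_eq hr0.symm)
  · exact (hf.lt_iff_lt hr hb).mp (hr0.trans_lt hfb)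

theorem G2_strict_mono_unique_root
    (G₂ : ℝ → ℝ)
    (hG : ∀ r : ℝ, G₂ r =
      -3 * r + 8 * (∑' m : ℕ, r ^ (m + 1) / ((m : ℝ) + 1) ^ 2) - 8 +
        (8 - 8 / r) * Real.log (1 - r) - 3 - π ^ 2 / 3 + 8 * Real.log 2) :
    StrictMonoOn G₂ (Ioo 0 1) ∧ (∃! r : ℝ, r ∈ Ioo (0 : ℝ) 1 ∧ G₂ r = 0) ∧
      (∀ r : ℝ, r ∈ Ioo (0 : ℝ) 1 → G₂ r = 0 → r ∈ Ioo (0.52 : ℝ) 0.53) := by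
  obtain rfl : G₂ = g2 := funext hG
  exact ⟨strictMonoOn_g2, strictMonoOn_g2.existsUnique_eq_zero ordConnected_Ioo continuousOn_g2
    (by norm_num) (by norm_num) g2_lt_zero zero_lt_g2⟩
end

section
/- Let 0 ≤ λ < γ ≤ δ and N ≥ 2 an integer. Define K_N(r) = (r + Σ_{m=2}^∞ c_m r^m)^2 + Σ_{m=N}^∞ c_m r^m − 1 − Σ_{m=2}^∞ (−1)^{m−1} c_m on [0,1], with c_m = 4(γ−λ)/(m^2(2γ+(δ−γ)(m−1))). Then K_N is strictly increasing on (0,1), K_N(0) < 0, K_N(1) > 0, and K_N has a unique root R_N ∈ (0,1). Moreover, for any nonnegative sequences (|a_m|), (|b_m|) with |a_m|+|b_m| ≤ c_m, and for all r ≤ R_N, (r + Σ_{m=2}^∞ (|a_m|+|b_m|) r^m)^2 + Σ_{m=N}^∞ (|a_m|+|b_m|) r^m ≤ 1 + Σ_{m=2}^∞ (−1)^{m−1} c_m. -/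
/-!
For `m ≥ 1` the coefficients `c m` are positive, decreasing and at most `2 / m ^ 2`, so every
series involved converges uniformly on `[0, 1]`, and the Bohr sum
`(r + ∑_{m ≥ 2} c m r ^ m) ^ 2 + ∑_{m ≥ N} c m r ^ m` is continuous and strictly increasing there.
By the Leibniz estimate the alternating sum `A = ∑_{m ≥ 2} (-1) ^ (m - 1) c m` satisfies
`|A| ≤ c 2 ≤ 1 / 2`, which gives `K_N 0 = -1 - A < 0 < K_N 1`; the root is then given by the
intermediate value theorem. Finally the Bohr sum is monotone in the coefficients and in `r`, and
equals `1 + A` at the root.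
-/

open Real Set

section Tail

variable {e f : ℕ → ℝ} {r s : ℝ}

lemma summable_mul_pow_add (he : ∀ m, 0 ≤ e m) (hs : Summable e) (k : ℕ) (hr0 : 0 ≤ r)
    (hr1 : r ≤ 1) : Summable fun m => e (m + k) * r ^ (m + k) :=
  ((summable_nat_add_iff k).mpr hs).of_nonneg_of_le
    (fun _ => mul_nonneg (he _) (pow_nonneg hr0 _))
    (fun _ => mul_le_of_le_one_right (he _) (pow_le_one₀ hr0 hr1))

lemma tsum_mul_pow_add_nonneg (he : ∀ m, 0 ≤ e m) (k : ℕ) (hr0 : 0 ≤ r) :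
    0 ≤ ∑' m, e (m + k) * r ^ (m + k) :=
  tsum_nonneg fun _ => mul_nonneg (he _) (pow_nonneg hr0 _)

lemma tsum_mul_pow_add_le {k : ℕ} (he : ∀ m, 0 ≤ e m) (hef : ∀ m, k ≤ m → e m ≤ f m)
    (hf : Summable f) (hr0 : 0 ≤ r) (hrs : r ≤ s) (hs1 : s ≤ 1) :
    ∑' m, e (m + k) * r ^ (m + k) ≤ ∑' m, f (m + k) * s ^ (m + k) := by
  have hf0 : ∀ m, 0 ≤ f (m + k) := fun m => (he _).trans (hef _ (Nat.le_add_left k m))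
  have hterm : ∀ m, e (m + k) * r ^ (m + k) ≤ f (m + k) * s ^ (m + k) := fun m =>
    mul_le_mul (hef _ (Nat.le_add_left k m)) (pow_le_pow_left₀ hr0 hrs _) (pow_nonneg hr0 _)
      (hf0 m)
  have hfs : Summable fun m => f (m + k) * s ^ (m + k) :=
    ((summable_nat_add_iff k).mpr hf).of_nonneg_of_le
      (fun m => mul_nonneg (hf0 m) (pow_nonneg (hr0.trans hrs) _))
      (fun m => mul_le_of_le_one_right (hf0 m) (pow_le_one₀ (hr0.trans hrs) hs1))
  exact (hfs.of_nonneg_of_le (fun m => mul_nonneg (he _) (pow_nonneg hr0 _)) hterm).tsum_le_tsum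
    hterm hfs

lemma continuousOn_tsum_mul_pow_add (he : ∀ m, 0 ≤ e m) (hs : Summable e) (k : ℕ) :
    ContinuousOn (fun r => ∑' m, e (m + k) * r ^ (m + k)) (Icc 0 1) :=
  continuousOn_tsum (fun _ => (continuous_const.mul (continuous_pow _)).continuousOn)
    ((summable_nat_add_iff k).mpr hs) fun m r hr => by
      rw [Real.norm_eq_abs, abs_of_nonneg (mul_nonneg (he _) (pow_nonneg hr.1 _))]
      exact mul_le_of_le_one_right (he _) (pow_le_one₀ hr.1 hr.2)

end Tail

noncomputable def bohrSum (e : ℕ → ℝ) (N : ℕ) (r : ℝ) : ℝ :=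
  (r + ∑' m, e (m + 2) * r ^ (m + 2)) ^ 2 + ∑' m, e (m + N) * r ^ (m + N)

section BohrSum

variable {e f : ℕ → ℝ} {N : ℕ}

lemma bohrSum_zero (hN : N ≠ 0) : bohrSum e N 0 = 0 := by
  simp [bohrSum, hN]

lemma bohrSum_le_bohrSum (hN : 2 ≤ N) (he : ∀ m, 0 ≤ e m) (hef : ∀ m, 2 ≤ m → e m ≤ f m)
    (hf : Summable f) {r s : ℝ} (hr0 : 0 ≤ r) (hrs : r ≤ s) (hs1 : s ≤ 1) :
    bohrSum e N r ≤ bohrSum f N s := by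
  have h2 := tsum_mul_pow_add_le (k := 2) he hef hf hr0 hrs hs1
  have hN' := tsum_mul_pow_add_le (k := N) he (fun m hm => hef m (hN.trans hm)) hf hr0 hrs hs1
  have hbase := add_nonneg hr0 (tsum_mul_pow_add_nonneg he 2 hr0)
  have hsq := pow_le_pow_left₀ hbase (add_le_add hrs h2) 2
  unfold bohrSum
  linarith

lemma strictMonoOn_bohrSum (hf0 : ∀ m, 0 ≤ f m) (hf : Summable f) :
    StrictMonoOn (bohrSum f N) (Icc 0 1) := by
  intro r hr s hs hrs
  have h2 := tsum_mul_pow_add_le (k := 2) hf0 (fun m _ => le_rfl) hf hr.1 hrs.le hs.2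
  have hN := tsum_mul_pow_add_le (k := N) hf0 (fun m _ => le_rfl) hf hr.1 hrs.le hs.2
  have hbase := add_nonneg hr.1 (tsum_mul_pow_add_nonneg hf0 2 hr.1)
  have hsq := pow_lt_pow_left₀ (add_lt_add_of_lt_of_le hrs h2) hbase two_ne_zero
  unfold bohrSum
  linarith

lemma continuousOn_bohrSum (hf0 : ∀ m, 0 ≤ f m) (hf : Summable f) :
    ContinuousOn (bohrSum f N) (Icc 0 1) :=
  ((continuousOn_id.add (continuousOn_tsum_mul_pow_add hf0 hf 2)).pow 2).add
    (continuousOn_tsum_mul_pow_add hf0 hf N)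

lemma sq_add_mul_sq_le_bohrSum (hf0 : ∀ m, 0 ≤ f m) (hf : Summable f) {r : ℝ} (hr0 : 0 ≤ r)
    (hr1 : r ≤ 1) : (r + f 2 * r ^ 2) ^ 2 ≤ bohrSum f N r := by
  have hfirst : f 2 * r ^ 2 ≤ ∑' m, f (m + 2) * r ^ (m + 2) :=
    (summable_mul_pow_add hf0 hf 2 hr0 hr1).le_tsum 0 fun m _ =>
      mul_nonneg (hf0 _) (pow_nonneg hr0 _)
  have hsq := pow_le_pow_left₀ (add_nonneg hr0 (mul_nonneg (hf0 2) (sq_nonneg r)))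
    (add_le_add_right hfirst r) 2
  unfold bohrSum
  linarith [tsum_mul_pow_add_nonneg hf0 N hr0]

end BohrSum

lemma abs_tsum_neg_one_pow_succ_mul_le {f : ℕ → ℝ} (hfa : Antitone f) (hfs : Summable f) :
    |∑' m, (-1) ^ (m + 1) * f m| ≤ f 0 := by
  simpa [pow_succ, tsum_neg] using alternating_series_error_bound f hfa hfs 0

lemma existsUnique_mem_Ioo_eq_zero {g : ℝ → ℝ} {a b : ℝ} (hab : a ≤ b)
    (hg : ContinuousOn g (Icc a b)) (hmono : StrictMonoOn g (Ioo a b)) (ha : g a < 0)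
    (hb : 0 < g b) : ∃! x, x ∈ Ioo a b ∧ g x = 0 := by
  obtain ⟨x, hx, hx0⟩ := intermediate_value_Ioo hab hg ⟨ha, hb⟩
  exact ⟨x, ⟨hx, hx0⟩, fun y ⟨hy, hy0⟩ => hmono.injOn hy hx (hy0.trans hx0.symm)⟩

noncomputable def coeffBound (γ δ lam : ℝ) (m : ℕ) : ℝ :=
  4 * (γ - lam) / ((m : ℝ) ^ 2 * (2 * γ + (δ - γ) * ((m : ℝ) - 1)))

section CoeffBound

variable {γ δ lam : ℝ}

lemma coeffBound_nonneg (hl : lam ≤ γ) (hγ : 0 ≤ γ) (hg : γ ≤ δ) (m : ℕ) :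
    0 ≤ coeffBound γ δ lam m := by
  rcases m.eq_zero_or_pos with rfl | hm
  · simp [coeffBound]
  have hm1 : (1 : ℝ) ≤ m := by exact_mod_cast hm
  unfold coeffBound
  have : 0 ≤ 2 * γ + (δ - γ) * ((m : ℝ) - 1) := by nlinarith
  positivity

lemma coeffBound_pos (hl : lam < γ) (hγ : 0 < γ) (hg : γ ≤ δ) {m : ℕ} (hm : m ≠ 0) :
    0 < coeffBound γ δ lam m := by
  have hm1 : (1 : ℝ) ≤ m := by exact_mod_cast Nat.one_le_iff_ne_zero.mpr hm
  have : 0 < 2 * γ + (δ - γ) * ((m : ℝ) - 1) := by nlinarith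
  exact div_pos (by linarith) (by positivity)

lemma coeffBound_le (hlam : 0 ≤ lam) (hγ : 0 < γ) (hg : γ ≤ δ) (m : ℕ) :
    coeffBound γ δ lam m ≤ 2 / (m : ℝ) ^ 2 := by
  rcases m.eq_zero_or_pos with rfl | hm
  · simp [coeffBound]
  have hm1 : (1 : ℝ) ≤ m := by exact_mod_cast hm
  have hD : 2 * γ ≤ 2 * γ + (δ - γ) * ((m : ℝ) - 1) := by nlinarith
  unfold coeffBound
  rw [div_le_div_iff₀ (by positivity) (by positivity)]
  nlinarith [mul_le_mul_of_nonneg_left hD (sq_nonneg (m : ℝ))]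

lemma antitone_coeffBound_succ (hl : lam ≤ γ) (hγ : 0 < γ) (hg : γ ≤ δ) :
    Antitone fun m => coeffBound γ δ lam (m + 1) := by
  refine antitone_nat_of_succ_le fun m => ?_
  have hm1 : (1 : ℝ) ≤ (m + 1 : ℕ) := by simp
  have hD : 0 < 2 * γ + (δ - γ) * (((m + 1 : ℕ) : ℝ) - 1) := by nlinarith
  refine div_le_div_of_nonneg_left (by linarith) (by positivity) ?_
  push_cast at hm1 hD ⊢
  nlinarith [mul_nonneg (sub_nonneg.mpr hg) (by positivity : (0 : ℝ) ≤ ((m : ℝ) + 2) ^ 2)]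

lemma summable_coeffBound (hlam : 0 ≤ lam) (hl : lam < γ) (hg : γ ≤ δ) :
    Summable (coeffBound γ δ lam) := by
  have hγ : 0 < γ := hlam.trans_lt hl
  have h2 : Summable fun m : ℕ => 2 / (m : ℝ) ^ 2 := by
    simpa [div_eq_mul_inv] using (summable_one_div_nat_pow.mpr one_lt_two).mul_left 2
  exact h2.of_nonneg_of_le (coeffBound_nonneg hl.le hγ.le hg) (coeffBound_le hlam hγ hg)

end CoeffBound

theorem KN_unique_root_and_inequality (γ δ lam : ℝ) (hlam : 0 ≤ lam) (hl : lam < γ)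
    (hg : γ ≤ δ) (N : ℕ) (hN : 2 ≤ N)
    (c : ℕ → ℝ)
    (hc : ∀ m : ℕ, c m = 4 * (γ - lam) / ((m : ℝ) ^ 2 * (2 * γ + (δ - γ) * ((m : ℝ) - 1))))
    (KN : ℝ → ℝ)
    (hK : ∀ r : ℝ, KN r =
      (r + ∑' m : ℕ, c (m + 2) * r ^ (m + 2)) ^ 2
        + (∑' m : ℕ, c (m + N) * r ^ (m + N))
        - 1 - ∑' m : ℕ, (-1 : ℝ) ^ (m + 1) * c (m + 2)) :
    StrictMonoOn KN (Ioo 0 1) ∧ KN 0 < 0 ∧ 0 < KN 1 ∧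
      (∃! R : ℝ, R ∈ Ioo (0 : ℝ) 1 ∧ KN R = 0) ∧
      (∀ R : ℝ, R ∈ Ioo (0 : ℝ) 1 → KN R = 0 →
        ∀ a b : ℕ → ℝ, (∀ m, 0 ≤ a m) → (∀ m, 0 ≤ b m) →
          (∀ m : ℕ, 2 ≤ m → a m + b m ≤ c m) →
          ∀ r : ℝ, 0 ≤ r → r ≤ R →
            (r + ∑' m : ℕ, (a (m + 2) + b (m + 2)) * r ^ (m + 2)) ^ 2
                + (∑' m : ℕ, (a (m + N) + b (m + N)) * r ^ (m + N))
              ≤ 1 + ∑' m : ℕ, (-1 : ℝ) ^ (m + 1) * c (m + 2)) := by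
  obtain rfl : c = coeffBound γ δ lam := funext hc
  set A := ∑' m : ℕ, (-1 : ℝ) ^ (m + 1) * coeffBound γ δ lam (m + 2)
  have hγ : 0 < γ := hlam.trans_lt hl
  have hc0 := coeffBound_nonneg hl.le hγ.le hg
  have hcs := summable_coeffBound hlam hl hg
  have hKB : ∀ r, KN r = bohrSum (coeffBound γ δ lam) N r - 1 - A := hK
  have hc2 : 0 < coeffBound γ δ lam 2 := coeffBound_pos hl hγ hg two_ne_zero
  have hc2_le : coeffBound γ δ lam 2 ≤ 1 / 2 :=
    (coeffBound_le hlam hγ hg 2).trans_eq (by norm_num)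
  have hA : |A| ≤ coeffBound γ δ lam 2 :=
    abs_tsum_neg_one_pow_succ_mul_le
      ((antitone_coeffBound_succ hl.le hγ hg).comp_monotone fun _ _ h => Nat.succ_le_succ h)
      ((summable_nat_add_iff 2).mpr hcs)
  obtain ⟨hA_lower, hA_upper⟩ := abs_le.mp hA
  have hmono : StrictMonoOn KN (Icc 0 1) := fun x hx y hy hxy => by
    rw [hKB, hKB]
    linarith [strictMonoOn_bohrSum (N := N) hc0 hcs hx hy hxy]
  have hK0 : KN 0 < 0 := by
    rw [hKB, bohrSum_zero (by omega)]
    linarith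
  have hK1 : 0 < KN 1 := by
    rw [hKB]
    nlinarith [sq_add_mul_sq_le_bohrSum (N := N) hc0 hcs zero_le_one le_rfl]
  have hcont : ContinuousOn KN (Icc 0 1) := by
    rw [funext hKB]
    exact ((continuousOn_bohrSum hc0 hcs).sub continuousOn_const).sub continuousOn_const
  refine ⟨hmono.mono Ioo_subset_Icc_self, hK0, hK1,
    existsUnique_mem_Ioo_eq_zero zero_le_one hcont (hmono.mono Ioo_subset_Icc_self) hK0 hK1, ?_⟩
  intro R hR hKR a b ha hb hab r hr0 hrR
  have hle := bohrSum_le_bohrSum (e := fun m => a m + b m) hN (fun m => add_nonneg (ha m) (hb m))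
    hab hcs hr0 hrR hR.2.le
  change bohrSum (fun m => a m + b m) N r ≤ 1 + A
  linarith [hKB R]
end

section
/- Let 0 ≤ λ < γ ≤ δ and define, for t a nonnegative integer and μ, β > 0, the function ψ(r) = (r + Σ_{m=2}^∞ c_m r^m)^n + Σ_{m=N}^∞ c_m r^m + μ·sgn(t)·(Σ_{m=1}^{t} c_m²)·r^N/(1−r) + β·(1/(1−r))·Σ_{m=t+1}^∞ c_m² r^{2m} − 1 − Σ_{m=2}^∞ (−1)^{m−1} c_m on [0,1) (with c₁ interpreted as 1 and c_m = 4(γ−λ)/(m^2(2γ+(δ−γ)(m−1))) for m ≥ 2, n ≥ 1, N ≥ 5, t = ⌊(N−1)/2⌋). Then ψ is strictly increasing on (0,1), ψ(0) < 0, ψ(r) → +∞ as r → 1⁻, and ψ has a unique root in (0,1). -/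
open Real Set Filter Topology

/-! On `[0, 1)` write `ψ r = F r + K r^N / (1 - r) - A` with `K = μ ∑_{m ≤ t} c_m² > 0` and
`A = 1 + ∑_{m ≥ 2} (-1)^(m-1) c_m`. The part `F` is assembled from power series with coefficients
in `[0, 1]` by sums, products and powers, so it is nonnegative, nondecreasing and continuous; the
pole term is strictly increasing and tends to `+∞` at `1`. Finally `A > 0`: since `c_m ≤ 2 / m²`,
the negative (even-index) part of the alternating sum is at most `π² / 12 < 1`. The intermediate
value theorem and strict monotonicity then give exactly one root. -/

structure NonnegMonoContOn (f : ℝ → ℝ) (s : Set ℝ) : Prop where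
  nonneg : ∀ x ∈ s, 0 ≤ f x
  monotoneOn : MonotoneOn f s
  continuousOn : ContinuousOn f s

namespace NonnegMonoContOn

variable {f g : ℝ → ℝ} {s : Set ℝ}

lemma const {c : ℝ} (hc : 0 ≤ c) : NonnegMonoContOn (fun _ ↦ c) s :=
  ⟨fun _ _ ↦ hc, monotoneOn_const, continuousOn_const⟩

lemma id_Ici : NonnegMonoContOn id (Ici 0) :=
  ⟨fun _ hx ↦ hx, monotoneOn_id, continuousOn_id⟩

lemma add (hf : NonnegMonoContOn f s) (hg : NonnegMonoContOn g s) :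
    NonnegMonoContOn (fun x ↦ f x + g x) s :=
  ⟨fun x hx ↦ add_nonneg (hf.nonneg x hx) (hg.nonneg x hx), hf.monotoneOn.add hg.monotoneOn,
    hf.continuousOn.add hg.continuousOn⟩

lemma mul (hf : NonnegMonoContOn f s) (hg : NonnegMonoContOn g s) :
    NonnegMonoContOn (fun x ↦ f x * g x) s :=
  ⟨fun x hx ↦ mul_nonneg (hf.nonneg x hx) (hg.nonneg x hx),
    hf.monotoneOn.mul hg.monotoneOn hf.nonneg hg.nonneg, hf.continuousOn.mul hg.continuousOn⟩

lemma pow (hf : NonnegMonoContOn f s) (n : ℕ) : NonnegMonoContOn (fun x ↦ f x ^ n) s :=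
  ⟨fun x hx ↦ pow_nonneg (hf.nonneg x hx) n,
    fun _ hx _ hy hxy ↦ pow_le_pow_left₀ (hf.nonneg _ hx) (hf.monotoneOn hx hy hxy) n,
    hf.continuousOn.pow n⟩

lemma mono {t : Set ℝ} (hf : NonnegMonoContOn f s) (hts : t ⊆ s) : NonnegMonoContOn f t :=
  ⟨fun x hx ↦ hf.nonneg x (hts hx), hf.monotoneOn.mono hts, hf.continuousOn.mono hts⟩

end NonnegMonoContOn

lemma nonnegMonoContOn_one_div_one_sub : NonnegMonoContOn (fun r ↦ 1 / (1 - r)) (Ico 0 1) :=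
  ⟨fun _ hr ↦ one_div_nonneg.mpr (sub_nonneg.mpr hr.2.le),
    fun _ hx _ hy hxy ↦ one_div_le_one_div_of_le (sub_pos.mpr hy.2) (by linarith),
    continuousOn_const.div (continuousOn_const.sub continuousOn_id)
      fun _ hr ↦ (sub_pos.mpr hr.2).ne'⟩

section PowerSeries

variable {a : ℕ → ℝ} {e : ℕ → ℕ}

lemma norm_mul_pow_le_pow {r s : ℝ} (ha : ∀ m, 0 ≤ a m) (ha' : ∀ m, a m ≤ 1) (he : ∀ m, m ≤ e m)
    (hr : r ∈ Icc 0 s) (hs : s < 1) (m : ℕ) : ‖a m * r ^ e m‖ ≤ s ^ m := by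
  have hr1 : r ≤ 1 := hr.2.trans hs.le
  rw [Real.norm_of_nonneg (mul_nonneg (ha m) (pow_nonneg hr.1 _))]
  calc a m * r ^ e m ≤ 1 * r ^ m :=
        mul_le_mul (ha' m) (pow_le_pow_of_le_one hr.1 hr1 (he m)) (pow_nonneg hr.1 _) zero_le_one
    _ ≤ s ^ m := by rw [one_mul]; exact pow_le_pow_left₀ hr.1 hr.2 m

lemma summable_mul_pow (ha : ∀ m, 0 ≤ a m) (ha' : ∀ m, a m ≤ 1) (he : ∀ m, m ≤ e m)
    {r : ℝ} (hr : r ∈ Ico 0 1) : Summable fun m ↦ a m * r ^ e m :=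
  .of_norm_bounded (summable_geometric_of_lt_one hr.1 hr.2)
    (norm_mul_pow_le_pow ha ha' he ⟨hr.1, le_rfl⟩ hr.2)

lemma continuousOn_tsum_mul_pow_s18 (ha : ∀ m, 0 ≤ a m) (ha' : ∀ m, a m ≤ 1) (he : ∀ m, m ≤ e m) :
    ContinuousOn (fun r ↦ ∑' m, a m * r ^ e m) (Ico 0 1) := by
  rintro x ⟨hx0, hx1⟩
  obtain ⟨s, hxs, hs1⟩ := exists_between hx1
  have hcont : ContinuousOn (fun r ↦ ∑' m, a m * r ^ e m) (Icc 0 s) :=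
    continuousOn_tsum (fun m ↦ by fun_prop) (summable_geometric_of_lt_one (hx0.trans hxs.le) hs1)
      fun m r hr ↦ norm_mul_pow_le_pow ha ha' he hr hs1 m
  refine (hcont x ⟨hx0, hxs.le⟩).mono_of_mem_nhdsWithin ?_
  exact mem_nhdsWithin.mpr ⟨Iio s, isOpen_Iio, hxs, fun y hy ↦ ⟨hy.2.1, le_of_lt hy.1⟩⟩

lemma nonnegMonoContOn_tsum_mul_pow (ha : ∀ m, 0 ≤ a m) (ha' : ∀ m, a m ≤ 1)
    (he : ∀ m, m ≤ e m) : NonnegMonoContOn (fun r ↦ ∑' m, a m * r ^ e m) (Ico 0 1) :=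
  ⟨fun _ hr ↦ tsum_nonneg fun m ↦ mul_nonneg (ha m) (pow_nonneg hr.1 _),
    fun _ hx _ hy hxy ↦ Summable.tsum_le_tsum
      (fun m ↦ mul_le_mul_of_nonneg_left (pow_le_pow_left₀ hx.1 hxy _) (ha m))
      (summable_mul_pow ha ha' he hx) (summable_mul_pow ha ha' he hy),
    continuousOn_tsum_mul_pow_s18 ha ha' he⟩

end PowerSeries

lemma neg_one_lt_tsum_neg_one_pow_succ_mul {b : ℕ → ℝ} (hb : ∀ m, 0 ≤ b m)
    (hb' : ∀ m, b m ≤ 2 / ((m : ℝ) + 2) ^ 2) : -1 < ∑' m, (-1) ^ (m + 1) * b m := by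
  have hzeta : HasSum (fun k : ℕ ↦ 1 / ((k : ℝ) + 1) ^ 2) (π ^ 2 / 6) := by
    simpa using (hasSum_nat_add_iff' 1).mpr hasSum_zeta_two
  have hdom : Summable fun m : ℕ ↦ 2 / ((m : ℝ) + 2) ^ 2 := by
    have := ((summable_nat_add_iff 2).mpr (Real.summable_one_div_nat_pow.mpr one_lt_two)).mul_left 2
    simpa [div_eq_mul_inv] using this
  have hsum : Summable b := .of_nonneg_of_le hb hb' hdom
  have heven : Summable fun k ↦ b (2 * k) := hsum.comp_injective (mul_right_injective₀ two_ne_zero)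
  have hodd : Summable fun k ↦ b (2 * k + 1) :=
    hsum.comp_injective fun _ _ h ↦ by simpa using h
  have heven_le : ∑' k, b (2 * k) ≤ π ^ 2 / 12 := by
    have hdom' : HasSum (fun k : ℕ ↦ 1 / 2 * (1 / ((k : ℝ) + 1) ^ 2)) (π ^ 2 / 12) := by
      have := hzeta.mul_left (1 / 2)
      rwa [show 1 / 2 * (π ^ 2 / 6) = π ^ 2 / 12 by ring] at this
    refine hdom'.tsum_eq ▸ Summable.tsum_le_tsum (fun k ↦ ?_) heven hdom'.summable
    calc b (2 * k) ≤ 2 / (((2 * k : ℕ) : ℝ) + 2) ^ 2 := hb' _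
      _ = 1 / 2 * (1 / ((k : ℝ) + 1) ^ 2) := by push_cast; field_simp
  have hodd_nonneg : 0 ≤ ∑' k, b (2 * k + 1) := tsum_nonneg fun k ↦ hb _
  have hsign_even : ∀ k, (-1 : ℝ) ^ (2 * k + 1) * b (2 * k) = -b (2 * k) := fun k ↦ by
    rw [Odd.neg_one_pow ⟨k, rfl⟩, neg_one_mul]
  have hsign_odd : ∀ k, (-1 : ℝ) ^ (2 * k + 1 + 1) * b (2 * k + 1) = b (2 * k + 1) := fun k ↦ by
    rw [Even.neg_one_pow ⟨k + 1, by ring⟩, one_mul]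
  have hsplit := tsum_even_add_odd (f := fun m ↦ (-1) ^ (m + 1) * b m)
    (heven.neg.congr fun k ↦ (hsign_even k).symm) (hodd.congr fun k ↦ (hsign_odd k).symm)
  rw [tsum_congr hsign_even, tsum_congr hsign_odd, tsum_neg] at hsplit
  nlinarith [pi_lt_d2, pi_pos]

section BohrCoeff

variable {γ δ lam x : ℝ}

lemma bohr_coeff_denom_pos (hlam : 0 ≤ lam) (hl : lam < γ) (hg : γ ≤ δ)
    (hx : 1 ≤ x) : 0 < x ^ 2 * (2 * γ + (δ - γ) * (x - 1)) := by
  have : 0 ≤ (δ - γ) * (x - 1) := mul_nonneg (by linarith) (by linarith)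
  exact mul_pos (by positivity) (by linarith)

lemma bohr_coeff_pos (hlam : 0 ≤ lam) (hl : lam < γ) (hg : γ ≤ δ) (hx : 1 ≤ x) :
    0 < 4 * (γ - lam) / (x ^ 2 * (2 * γ + (δ - γ) * (x - 1))) :=
  div_pos (by linarith) (bohr_coeff_denom_pos hlam hl hg hx)

lemma bohr_coeff_le_two_div_sq (hlam : 0 ≤ lam) (hl : lam < γ) (hg : γ ≤ δ) (hx : 1 ≤ x) :
    4 * (γ - lam) / (x ^ 2 * (2 * γ + (δ - γ) * (x - 1))) ≤ 2 / x ^ 2 := by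
  rw [div_le_div_iff₀ (bohr_coeff_denom_pos hlam hl hg hx) (by positivity)]
  have : 0 ≤ (δ - γ) * (x - 1) := mul_nonneg (by linarith) (by linarith)
  nlinarith [sq_nonneg x, mul_nonneg (sq_nonneg x) this, mul_nonneg (sq_nonneg x) hlam]

lemma bohr_coeff_le_one (hlam : 0 ≤ lam) (hl : lam < γ) (hg : γ ≤ δ) (hx : 2 ≤ x) :
    4 * (γ - lam) / (x ^ 2 * (2 * γ + (δ - γ) * (x - 1))) ≤ 1 :=
  (bohr_coeff_le_two_div_sq hlam hl hg (by linarith)).trans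
    (div_le_one_of_le₀ (by nlinarith) (by positivity))

end BohrCoeff

lemma nonnegMonoContOn_bohr_majorant {c : ℕ → ℝ} (hc_nonneg : ∀ m, 2 ≤ m → 0 ≤ c m)
    (hc_le_one : ∀ m, 2 ≤ m → c m ≤ 1) {β : ℝ} (hβ : 0 ≤ β) (n N t : ℕ) (hN : 2 ≤ N)
    (ht : 1 ≤ t) :
    NonnegMonoContOn (fun r ↦ (r + ∑' m : ℕ, c (m + 2) * r ^ (m + 2)) ^ n
      + ∑' m : ℕ, c (m + N) * r ^ (m + N)
      + β * (1 / (1 - r)) * ∑' m : ℕ, c (m + t + 1) ^ 2 * r ^ (2 * (m + t + 1))) (Ico 0 1) := by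
  have hS₁ := nonnegMonoContOn_tsum_mul_pow (a := fun m ↦ c (m + 2)) (e := fun m ↦ m + 2)
    (fun m ↦ hc_nonneg _ (by omega)) (fun m ↦ hc_le_one _ (by omega)) (fun m ↦ by omega)
  have hS₂ := nonnegMonoContOn_tsum_mul_pow (a := fun m ↦ c (m + N)) (e := fun m ↦ m + N)
    (fun m ↦ hc_nonneg _ (by omega)) (fun m ↦ hc_le_one _ (by omega)) (fun m ↦ by omega)
  have hS₃ := nonnegMonoContOn_tsum_mul_pow (a := fun m ↦ c (m + t + 1) ^ 2)
    (e := fun m ↦ 2 * (m + t + 1)) (fun m ↦ sq_nonneg _)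
    (fun m ↦ pow_le_one₀ (hc_nonneg _ (by omega)) (hc_le_one _ (by omega))) (fun m ↦ by omega)
  exact (((NonnegMonoContOn.id_Ici.mono Ico_subset_Ici_self).add hS₁).pow n).add hS₂ |>.add
    (((NonnegMonoContOn.const hβ).mul nonnegMonoContOn_one_div_one_sub).mul hS₃)

section OneSubPole

variable {F ψ : ℝ → ℝ} {K A : ℝ} {N : ℕ}

lemma strictMonoOn_of_eq_add_mul_pow_div_one_sub (hF : MonotoneOn F (Ico 0 1)) (hK : 0 < K)
    (hN : N ≠ 0) (hψ : ∀ r < 1, ψ r = F r + K * (r ^ N / (1 - r)) - A) :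
    StrictMonoOn ψ (Ico 0 1) := by
  intro x hx y hy hxy
  rw [hψ x hx.2, hψ y hy.2]
  have hpole : x ^ N / (1 - x) < y ^ N / (1 - y) :=
    calc x ^ N / (1 - x) < y ^ N / (1 - x) :=
          div_lt_div_of_pos_right (pow_lt_pow_left₀ hxy hx.1 hN) (sub_pos.mpr hx.2)
      _ ≤ y ^ N / (1 - y) :=
          div_le_div_of_nonneg_left (pow_nonneg (hx.1.trans hxy.le) N) (sub_pos.mpr hy.2)
            (by linarith)
  linarith [hF hx hy hxy.le, mul_lt_mul_of_pos_left hpole hK]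

lemma continuousOn_of_eq_add_mul_pow_div_one_sub (hF : ContinuousOn F (Ico 0 1))
    (hψ : ∀ r < 1, ψ r = F r + K * (r ^ N / (1 - r)) - A) : ContinuousOn ψ (Ico 0 1) := by
  refine ContinuousOn.congr ?_ fun r hr ↦ hψ r hr.2
  exact (hF.add (continuousOn_const.mul ((continuousOn_pow N).div
    (continuousOn_const.sub continuousOn_id) fun r hr ↦ (sub_pos.mpr hr.2).ne'))).sub
    continuousOn_const

lemma tendsto_atTop_of_eq_add_mul_pow_div_one_sub (hF : ∀ r ∈ Ico 0 1, 0 ≤ F r) (hK : 0 < K)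
    (hψ : ∀ r < 1, ψ r = F r + K * (r ^ N / (1 - r)) - A) : Tendsto ψ (𝓝[<] 1) atTop := by
  have hpole : Tendsto (fun r : ℝ ↦ (1 - r)⁻¹) (𝓝[<] 1) atTop := by
    refine tendsto_inv_nhdsGT_zero.comp (tendsto_nhdsWithin_of_tendsto_nhds_of_eventually_within _
      ?_ (eventually_nhdsWithin_of_forall fun r (hr : r < 1) ↦ show 0 < 1 - r by linarith))
    have : Tendsto (fun r : ℝ ↦ 1 - r) (𝓝 1) (𝓝 (1 - 1)) := tendsto_const_nhds.sub tendsto_id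
    simpa using this.mono_left nhdsWithin_le_nhds
  have hnum : Tendsto (fun r : ℝ ↦ K * r ^ N) (𝓝[<] 1) (𝓝 K) := by
    have : Tendsto (fun r : ℝ ↦ K * r ^ N) (𝓝 1) (𝓝 (K * 1 ^ N)) :=
      tendsto_const_nhds.mul (tendsto_id.pow N)
    simpa using this.mono_left nhdsWithin_le_nhds
  refine tendsto_atTop_mono' _ ?_
    (tendsto_atTop_add_const_right _ (-A) (hnum.pos_mul_atTop hK hpole))
  filter_upwards [Ioo_mem_nhdsLT zero_lt_one] with r hr
  rw [hψ r hr.2, div_eq_mul_inv]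
  linarith [hF r ⟨hr.1.le, hr.2⟩]

end OneSubPole

lemma existsUnique_zero_of_strictMonoOn_Ico {f : ℝ → ℝ} (hmono : StrictMonoOn f (Ico 0 1))
    (hcont : ContinuousOn f (Ico 0 1)) (h0 : f 0 < 0) (h1 : Tendsto f (𝓝[<] 1) atTop) :
    ∃! r, r ∈ Ioo 0 1 ∧ f r = 0 := by
  obtain ⟨s, hfs, hs⟩ :=
    ((h1.eventually_gt_atTop 0).and (Ioo_mem_nhdsLT zero_lt_one)).exists
  obtain ⟨r, hr, hfr⟩ := intermediate_value_Ioo hs.1.le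
    (hcont.mono (Icc_subset_Ico_right hs.2)) ⟨h0, hfs⟩
  have hr1 : r ∈ Ioo 0 1 := ⟨hr.1, hr.2.trans hs.2⟩
  exact ⟨r, ⟨hr1, hfr⟩, fun y ⟨hy, hfy⟩ ↦
    hmono.injOn (Ioo_subset_Ico_self hy) (Ioo_subset_Ico_self hr1) (hfy.trans hfr.symm)⟩

theorem refined_bohr_psi_unique_root (γ δ lam μ β : ℝ) (hlam : 0 ≤ lam) (hl : lam < γ)
    (hg : γ ≤ δ) (hμ : 0 < μ) (hβ : 0 < β)
    (n N t : ℕ) (hn : 1 ≤ n) (hN : 5 ≤ N) (ht : t = (N - 1) / 2)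
    (c : ℕ → ℝ) (hc1 : c 1 = 1)
    (hc : ∀ m : ℕ, 2 ≤ m →
      c m = 4 * (γ - lam) / ((m : ℝ) ^ 2 * (2 * γ + (δ - γ) * ((m : ℝ) - 1))))
    (ψ : ℝ → ℝ)
    (hψ : ∀ r : ℝ, r < 1 → ψ r =
      (r + ∑' m : ℕ, c (m + 2) * r ^ (m + 2)) ^ n
        + (∑' m : ℕ, c (m + N) * r ^ (m + N))
        + μ * (if t = 0 then (0 : ℝ) else 1) * (∑ m ∈ Finset.Icc 1 t, (c m) ^ 2) *
            (r ^ N / (1 - r))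
        + β * (1 / (1 - r)) * (∑' m : ℕ, (c (m + t + 1)) ^ 2 * r ^ (2 * (m + t + 1)))
        - 1 - ∑' m : ℕ, (-1 : ℝ) ^ (m + 1) * c (m + 2)) :
    StrictMonoOn ψ (Ioo 0 1) ∧ ψ 0 < 0 ∧
      Tendsto ψ (nhdsWithin 1 (Iio 1)) atTop ∧
      (∃! r : ℝ, r ∈ Ioo (0 : ℝ) 1 ∧ ψ r = 0) := by
  have ht0 : t ≠ 0 := by omega
  have hc_cast : ∀ m : ℕ, 2 ≤ m → (2 : ℝ) ≤ m := fun m hm ↦ by exact_mod_cast hm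
  have hc_nonneg : ∀ m, 2 ≤ m → 0 ≤ c m := fun m hm ↦
    (hc m hm).symm ▸ (bohr_coeff_pos hlam hl hg (by linarith [hc_cast m hm])).le
  have hc_le : ∀ m, 2 ≤ m → c m ≤ 2 / (m : ℝ) ^ 2 := fun m hm ↦
    (hc m hm).symm ▸ bohr_coeff_le_two_div_sq hlam hl hg (by linarith [hc_cast m hm])
  have hc_le_one : ∀ m, 2 ≤ m → c m ≤ 1 := fun m hm ↦
    (hc m hm).symm ▸ bohr_coeff_le_one hlam hl hg (hc_cast m hm)
  set K := μ * ∑ m ∈ Finset.Icc 1 t, c m ^ 2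
  set A := 1 + ∑' m : ℕ, (-1 : ℝ) ^ (m + 1) * c (m + 2)
  have hK : 0 < K := mul_pos hμ <|
    Finset.sum_pos' (fun _ _ ↦ sq_nonneg _) ⟨1, by simp; omega, by simp [hc1]⟩
  have hA : 0 < A := by
    have := neg_one_lt_tsum_neg_one_pow_succ_mul (b := fun m ↦ c (m + 2))
      (fun m ↦ hc_nonneg _ (by omega)) fun m ↦ by exact_mod_cast hc_le (m + 2) (by omega)
    linarith
  obtain ⟨F, hF, hF0, hψF⟩ : ∃ F, NonnegMonoContOn F (Ico 0 1) ∧ F 0 = 0 ∧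
      ∀ r < 1, ψ r = F r + K * (r ^ N / (1 - r)) - A :=
    ⟨_, nonnegMonoContOn_bohr_majorant hc_nonneg hc_le_one hβ.le n N t (by omega) (by omega),
      by simp [show n ≠ 0 by omega, show N ≠ 0 by omega],
      fun r hr ↦ by rw [hψ r hr, if_neg ht0]; ring⟩
  have hψ0 : ψ 0 < 0 := by
    rw [hψF 0 one_pos, hF0, zero_pow (by omega)]
    linarith
  have hmono := strictMonoOn_of_eq_add_mul_pow_div_one_sub hF.monotoneOn hK (by omega) hψF
  have htend := tendsto_atTop_of_eq_add_mul_pow_div_one_sub hF.nonneg hK hψF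
  exact ⟨hmono.mono Ioo_subset_Ico_self, hψ0, htend, existsUnique_zero_of_strictMonoOn_Ico hmono
    (continuousOn_of_eq_add_mul_pow_div_one_sub hF.continuousOn hψF) hψ0 htend⟩
end
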